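/- Suppose a coin system C = (1, c_2, ..., c_n) is not orderly, and let w be its smallest counterexample. If the greedy solution for w uses x_i coins of value c_i and some optimal solution for w uses y_i coins of value c_i, then x_i·y_i = 0 for every i. -/

import Mathlib

/-- The largest coin value in `C` that is at most `v` (or 0 if none). -/
def coinMax (C : List ℕ) (v : ℕ) : ℕ := (C.filter (· ≤ v)).foldr max 0

/-- Fuelled greedy coin count. -/
def grdAux (C : List ℕ) : ℕ → ℕ → ℕ
  | 0, _ => 0
  | fuel + 1, v =>
    let c := coinMax C v
    if v = 0 ∨ c = 0 then 0 else 1 + grdAux C fuel (v - c)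

/-- Number of coins used by the greedy algorithm to represent `v` with coin system `C`. -/
def grd (C : List ℕ) (v : ℕ) : ℕ := grdAux C v v

/-- The set of sizes of representations of `v` as nonnegative integer combinations of
the coin values in `C`. -/
def reprCosts (C : List ℕ) (v : ℕ) : Set ℕ :=
  {k | ∃ x : List ℕ, x.length = C.length ∧ (List.zipWith (· * ·) x C).sum = v ∧ x.sum = k}

/-- Minimum number of coins needed to represent `v` with coin system `C`. -/
noncomputable def opt (C : List ℕ) (v : ℕ) : ℕ := sInf (reprCosts C v)

/-- A coin system is orderly if greedy is optimal for every positive value. -/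
def Orderly (C : List ℕ) : Prop := ∀ v : ℕ, 0 < v → grd C v = opt C v

/-- Fuelled greedy: the list of coins taken by the greedy algorithm. -/
def grdCoinsAux (C : List ℕ) : ℕ → ℕ → List ℕ
  | 0, _ => []
  | fuel + 1, v =>
    let c := coinMax C v
    if v = 0 ∨ c = 0 then [] else c :: grdCoinsAux C fuel (v - c)

/-- The list of coins taken by the greedy algorithm for value `v`. -/
def grdCoins (C : List ℕ) (v : ℕ) : List ℕ := grdCoinsAux C v v


/-!
Let `c` be a coin used both by the greedy solution and by an optimal solution `y` for the
smallest counterexample `w`. Removing one `c` from the greedy solution of `w` leaves exactly the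
greedy solution of `w - c`, and removing it from `y` leaves a representation of `w - c`, so
`grd (w - c) = grd w - 1` and `opt (w - c) ≤ opt w - 1`. Since `w - c < w` is not a
counterexample, `grd w ≤ opt w`, contradicting `opt w < grd w`.
-/

section CoinMax

variable {C : List ℕ} {v : ℕ}

lemma coinMax_le : coinMax C v ≤ v :=
  List.max_le_of_forall_le _ _ fun _ hx => by simpa using (List.mem_filter.1 hx).2

lemma le_coinMax {c : ℕ} (hc : c ∈ C) (hcv : c ≤ v) : c ≤ coinMax C v :=
  List.le_max_of_le' 0 (List.mem_filter.2 ⟨hc, by simpa using hcv⟩) le_rfl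

lemma coinMax_mem (h : coinMax C v ≠ 0) : coinMax C v ∈ C := by
  have hne : C.filter (· ≤ v) ≠ [] := by
    rintro hnil
    simp [coinMax, hnil] at h
  exact List.mem_of_mem_filter (List.maximum_mem (List.foldr_max_of_ne_nil hne).symm)

lemma coinMax_ne_zero (h1 : 1 ∈ C) (hv : v ≠ 0) : coinMax C v ≠ 0 := by
  have := le_coinMax h1 (Nat.one_le_iff_ne_zero.2 hv)
  omega

lemma coinMax_mono {v' : ℕ} (h : v ≤ v') : coinMax C v ≤ coinMax C v' := by
  by_cases h0 : coinMax C v = 0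
  · exact h0 ▸ Nat.zero_le _
  · exact le_coinMax (coinMax_mem h0) (coinMax_le.trans h)

end CoinMax

section Greedy

variable {C : List ℕ}

lemma grdCoinsAux_eq_of_le :
    ∀ {f₁ f₂ v : ℕ}, v ≤ f₁ → v ≤ f₂ → grdCoinsAux C f₁ v = grdCoinsAux C f₂ v
  | 0, 0, _, _, _ => rfl
  | 0, _ + 1, 0, _, _ | _ + 1, 0, 0, _, _ => by simp [grdCoinsAux]
  | f₁ + 1, f₂ + 1, v, h₁, h₂ => by
    simp only [grdCoinsAux]
    split_ifs with h
    · rfl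
    · have := Nat.one_le_iff_ne_zero.2 (not_or.1 h).2
      rw [grdCoinsAux_eq_of_le (f₁ := f₁) (f₂ := f₂) (by omega) (by omega)]

lemma grdAux_eq_length : ∀ f v, grdAux C f v = (grdCoinsAux C f v).length
  | 0, _ => rfl
  | f + 1, v => by
    simp only [grdAux, grdCoinsAux]
    split_ifs
    · rfl
    · rw [List.length_cons, grdAux_eq_length, Nat.add_comm]

lemma grd_eq_length (v : ℕ) : grd C v = (grdCoins C v).length :=
  grdAux_eq_length v v

lemma grdCoins_eq_cons {v : ℕ} (hv : v ≠ 0) (hc : coinMax C v ≠ 0) :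
    grdCoins C v = coinMax C v :: grdCoins C (v - coinMax C v) := by
  obtain ⟨n, rfl⟩ : ∃ n, v = n + 1 := Nat.exists_eq_succ_of_ne_zero hv
  have : coinMax C (n + 1) ≤ n + 1 := coinMax_le
  rw [grdCoins, grdCoinsAux, if_neg (by tauto), grdCoins,
    grdCoinsAux_eq_of_le (f₂ := n + 1 - coinMax C (n + 1)) (by omega) le_rfl]

lemma mem_grdCoinsAux {a : ℕ} : ∀ {f v : ℕ}, a ∈ grdCoinsAux C f v → a ∈ C ∧ a ≠ 0
  | 0, _, h => by simp [grdCoinsAux] at h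
  | f + 1, v, h => by
    simp only [grdCoinsAux] at h
    split_ifs at h with hc
    · simp at h
    · rcases List.mem_cons.1 h with rfl | h
      · exact ⟨coinMax_mem (not_or.1 hc).2, (not_or.1 hc).2⟩
      · exact mem_grdCoinsAux h

lemma mem_grdCoins {a v : ℕ} (h : a ∈ grdCoins C v) : a ∈ C ∧ a ≠ 0 :=
  mem_grdCoinsAux h

lemma sum_grdCoins (h1 : 1 ∈ C) (v : ℕ) : (grdCoins C v).sum = v := by
  induction v using Nat.strong_induction_on with
  | _ v ih =>
    rcases Nat.eq_zero_or_pos v with rfl | hv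
    · rfl
    · have hc := coinMax_ne_zero h1 hv.ne'
      have : coinMax C v ≤ v := coinMax_le
      rw [grdCoins_eq_cons hv.ne' hc, List.sum_cons, ih _ (by omega)]
      omega

lemma grdCoins_sub_of_mem (h1 : 1 ∈ C) {v c : ℕ} (hc : c ∈ grdCoins C v) :
    grdCoins C (v - c) = (grdCoins C v).erase c := by
  induction v using Nat.strong_induction_on with
  | _ v ih =>
    rcases Nat.eq_zero_or_pos v with rfl | hv
    · simp [grdCoins, grdCoinsAux] at hc
    set d := coinMax C v
    have hd : d ≠ 0 := coinMax_ne_zero h1 hv.ne'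
    have hdv : d ≤ v := coinMax_le
    rw [grdCoins_eq_cons hv.ne' hd] at hc ⊢
    by_cases hcd : c = d
    · rw [hcd, List.erase_cons_head]
    have hc' : c ∈ grdCoins C (v - d) := (List.mem_cons.1 hc).resolve_left hcd
    have hc0 : c ≠ 0 := (mem_grdCoins hc').2
    have hcv : c ≤ v - d := sum_grdCoins h1 (v - d) ▸ List.le_sum_of_mem hc'
    -- the largest coin `d ≤ v` still fits into `v - c`, because `d + c ≤ v`
    have hd' : coinMax C (v - c) = d :=
      le_antisymm (coinMax_mono (by omega)) (le_coinMax (coinMax_mem hd) (by omega))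
    rw [grdCoins_eq_cons (by omega) (hd' ▸ hd), hd',
      List.erase_cons_tail (by simpa using Ne.symm hcd), ← ih (v - d) (by omega) hc',
      Nat.sub_right_comm]

lemma grd_sub_add_one_of_mem (h1 : 1 ∈ C) {v c : ℕ} (hc : c ∈ grdCoins C v) :
    grd C (v - c) + 1 = grd C v := by
  rw [grd_eq_length, grd_eq_length, grdCoins_sub_of_mem h1 hc, List.length_erase_add_one hc]

end Greedy

section Optimal

variable {C : List ℕ}

lemma opt_zero : opt C 0 = 0 :=
  Nat.sInf_eq_zero.2 <| .inl ⟨C.map fun _ => 0, List.length_map _,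
    by rw [List.zipWith_map_left]; simp, by simp⟩

lemma grd_mem_reprCosts (h1 : 1 ∈ C) (hnd : C.Nodup) (v : ℕ) : grd C v ∈ reprCosts C v := by
  have hsub : (grdCoins C v).toFinset ⊆ C.toFinset := fun a ha =>
    List.mem_toFinset.2 (mem_grdCoins (List.mem_toFinset.1 ha)).1
  refine ⟨C.map fun c => (grdCoins C v).count c, List.length_map _, ?_, ?_⟩
  · rw [List.zipWith_map_left, List.zipWith_self]
    calc (C.map fun c => (grdCoins C v).count c * c).sum
        = ∑ c ∈ C.toFinset, (grdCoins C v).count c * c := (List.sum_toFinset _ hnd).symm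
      _ = (grdCoins C v).sum := by
        simp only [Finset.sum_list_count_of_subset _ _ hsub, smul_eq_mul]
      _ = v := sum_grdCoins h1 v
  · rw [← List.sum_toFinset _ hnd, grd_eq_length]
    simpa using Multiset.sum_count_eq_card (m := (grdCoins C v : Multiset ℕ))
      fun a ha => hsub (List.mem_toFinset.2 (Multiset.mem_coe.1 ha))

lemma opt_le_grd (h1 : 1 ∈ C) (hnd : C.Nodup) (v : ℕ) : opt C v ≤ grd C v :=
  Nat.sInf_le (grd_mem_reprCosts h1 hnd v)

lemma exists_repr_sub_coin :
    ∀ {C y : List ℕ} {i : ℕ}, i < C.length → y.length = C.length → 0 < y.getD i 0 →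
    ∃ y' : List ℕ, y'.length = C.length ∧
      (List.zipWith (· * ·) y' C).sum + C.getD i 0 = (List.zipWith (· * ·) y C).sum ∧
      y'.sum + 1 = y.sum
  | [], _, _, hi, _, _ => absurd hi (Nat.not_lt_zero _)
  | _ :: _, [], _, _, hy, _ => absurd hy (by simp)
  | _ :: _, a :: _, 0, _, hy, ha => by
    simp only [List.getD_cons_zero] at ha ⊢
    refine ⟨(a - 1) :: _, by simpa using hy, ?_, by simp; omega⟩
    obtain ⟨a, rfl⟩ := Nat.exists_eq_add_of_lt ha
    simp only [List.zipWith_cons_cons, List.sum_cons, add_tsub_cancel_right, add_mul, one_mul]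
    omega
  | _ :: _, a :: _, i + 1, hi, hy, ha => by
    simp only [List.getD_cons_succ] at ha ⊢
    obtain ⟨y', hlen, hval, hsum⟩ :=
      exists_repr_sub_coin (Nat.lt_of_succ_lt_succ hi) (by simpa using hy) ha
    refine ⟨a :: y', by simpa using hlen, ?_, by simp; omega⟩
    simp only [List.zipWith_cons_cons, List.sum_cons]
    omega

lemma opt_sub_coin_lt {y : List ℕ} {i v : ℕ} (hi : i < C.length) (hy : y.length = C.length)
    (hyv : (List.zipWith (· * ·) y C).sum = v) (hyi : 0 < y.getD i 0) :
    opt C (v - C.getD i 0) < y.sum := by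
  obtain ⟨y', hlen, hval, hsum⟩ := exists_repr_sub_coin hi hy hyi
  exact Nat.lt_of_le_of_lt (Nat.sInf_le ⟨y', hlen, by omega, rfl⟩) (by omega)

end Optimal

lemma grd_eq_opt_of_lt_sInf {C : List ℕ} {u : ℕ}
    (hu : u < sInf {v : ℕ | 0 < v ∧ grd C v ≠ opt C v}) : grd C u = opt C u := by
  rcases Nat.eq_zero_or_pos u with rfl | hu0
  · rw [opt_zero]; rfl
  · by_contra h
    exact Nat.notMem_of_lt_sInf hu ⟨hu0, h⟩

lemma grd_eq_opt_of_shared_coin {C y : List ℕ} {i v : ℕ} (h1 : 1 ∈ C) (hnd : C.Nodup)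
    (hi : i < C.length) (hy : y.length = C.length) (hyv : (List.zipWith (· * ·) y C).sum = v)
    (hyopt : y.sum = opt C v) (hgi : C.getD i 0 ∈ grdCoins C v) (hyi : 0 < y.getD i 0)
    (hsub : grd C (v - C.getD i 0) = opt C (v - C.getD i 0)) : grd C v = opt C v := by
  have hgrd := grd_sub_add_one_of_mem h1 hgi
  have hopt := opt_sub_coin_lt hi hy hyv hyi
  have := opt_le_grd h1 hnd v
  omega

theorem stmt_11 (C : List ℕ) (hchain : List.Chain' (· < ·) C)
    (hhead : C.getD 0 0 = 1) (hnot : ¬ Orderly C)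
    (w : ℕ) (hw : w = sInf {v : ℕ | 0 < v ∧ grd C v ≠ opt C v})
    (y : List ℕ) (hylen : y.length = C.length)
    (hyval : (List.zipWith (· * ·) y C).sum = w)
    (hyopt : y.sum = opt C w) :
    ∀ i : ℕ, i < C.length →
      (grdCoins C w).count (C.getD i 0) * y.getD i 0 = 0 := by
  have h1 : 1 ∈ C := by
    cases C with
    | nil => simp at hhead
    | cons a t => simp_all
  have hS : {v : ℕ | 0 < v ∧ grd C v ≠ opt C v}.Nonempty := by
    simpa [Orderly, Set.Nonempty] using hnot
  obtain ⟨hw0, hwne⟩ : 0 < w ∧ grd C w ≠ opt C w := hw ▸ Nat.sInf_mem hS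
  intro i hi
  by_contra hne
  obtain ⟨hgi, hyi⟩ := mul_ne_zero_iff.1 hne
  replace hgi := List.count_pos_iff.1 (Nat.pos_of_ne_zero hgi)
  have hc0 := (mem_grdCoins hgi).2
  refine hwne (grd_eq_opt_of_shared_coin h1 hchain.pairwise.nodup hi hylen hyval hyopt hgi
    (Nat.pos_of_ne_zero hyi) (grd_eq_opt_of_lt_sInf ?_))
  omega
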